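/- Let d = 1. If 1, x, y are linearly dependent over ℚ and x is irrational, then (x,y) ∉ Π, i.e., there exists a non-increasing ψ : ℕ → ℝ_{≥0} with Σ_n ψ(n) = ∞ such that ‖nx+y‖ ≥ ψ(n) for all sufficiently large n ∈ ℕ. -/

import Mathlib

open scoped ENNReal
open Filter

/-- Distance from `t ∈ ℝ` to the nearest integer. -/
noncomputable def nrm1 (t : ℝ) : ℝ := |t - round t|

/-- `S_ℓ(x,y) = Σ_{n≥ℓ} min_{ℓ≤m≤n} ‖mx+y‖`, valued in `[0,∞]` (case `d = 1`). -/
noncomputable def S1 (l : ℤ) (x y : ℝ) : ℝ≥0∞ :=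
  ∑' n : ℕ, ⨅ m ∈ Finset.Icc l (l + n), ENNReal.ofReal (nrm1 ((m : ℝ) * x + y))

/-- The class `𝒟` of non-increasing `ψ : ℕ → ℝ≥0` with `Σ ψ(n) = ∞` (case `d = 1`). -/
def calD1 : Set (ℕ → ℝ) := {ψ | (∀ n, 0 ≤ ψ n) ∧ Antitone ψ ∧ ¬ Summable ψ}

/-- `Π` for `d = 1`. -/
def Pi1 : Set (ℝ × ℝ) :=
  {p | ∀ ψ ∈ calD1, ∃ᶠ n : ℕ in atTop, nrm1 ((n : ℝ) * p.1 + p.2) < ψ n}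

/-- The vertical fiber `Φ(x)`. -/
def Phi1 (x : ℝ) : Set ℝ := {y | (x, y) ∈ Pi1}

/-- The horizontal fiber `Π^y`. -/
def PiY1 (y : ℝ) : Set ℝ := {x | (x, y) ∈ Pi1}

/-!
From `k₁ x + k₂ y + k₃ = 0` and the irrationality of `x` we get `k₂ ≠ 0` and
`k₂ (n x + y) ≡ (k₂ n - k₁) x (mod ℤ)`, so `|k₂| ‖n x + y‖ ≥ φ(|k₂| n + |k₁|)` for large `n`,
where `φ(N) = min_{1 ≤ j ≤ N + 1} ‖j x‖` (`minNrm1 x N`). It remains to see that `φ` is not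
summable. If `q ≤ q'` and `‖q' x‖ < ‖q x‖`, the integer `q' round (q x) - q round (q' x)` cannot
vanish, whence `q' ‖q x‖ + q ‖q' x‖ ≥ 1`. Applied to a minimiser `q` of `φ(M)` and the least `q'`
doing better, this gives `2 (N + 2) φ(N) ≥ 1` for `N = q' - 2 ≥ M`, while a summable antitone
sequence is `o(1 / N)`.
-/

open Topology

lemma nrm1_eq_norm (t : ℝ) : nrm1 t = ‖(t : UnitAddCircle)‖ := UnitAddCircle.norm_eq.symm

lemma nrm1_nonneg (t : ℝ) : 0 ≤ nrm1 t := abs_nonneg _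

lemma nrm1_le_abs_sub_intCast (t : ℝ) (m : ℤ) : nrm1 t ≤ |t - m| := round_le t m

lemma nrm1_add_intCast (t : ℝ) (m : ℤ) : nrm1 (t + m) = nrm1 t := by
  simp only [nrm1, round_add_intCast, Int.cast_add, add_sub_add_right_eq_sub]

lemma nrm1_neg (t : ℝ) : nrm1 (-t) = nrm1 t := by
  rw [nrm1_eq_norm, nrm1_eq_norm, AddCircle.coe_neg, norm_neg]

lemma nrm1_intCast_mul_le (k : ℤ) (t : ℝ) : nrm1 (k * t) ≤ k.natAbs * nrm1 t := by
  calc nrm1 (k * t) ≤ |k * t - ((k * round t : ℤ) : ℝ)| := nrm1_le_abs_sub_intCast _ _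
    _ = k.natAbs * nrm1 t := by
      rw [Nat.cast_natAbs, Int.cast_abs, nrm1, ← abs_mul]
      push_cast
      ring_nf

lemma Irrational.nrm1_pos {t : ℝ} (ht : Irrational t) : 0 < nrm1 t :=
  abs_pos.mpr (sub_ne_zero.mpr (ht.ne_int _))

lemma exists_nrm1_natCast_mul_lt (x : ℝ) {ε : ℝ} (hε : 0 < ε) :
    ∃ j : ℕ, 0 < j ∧ nrm1 (j * x) < ε := by
  obtain ⟨n, hn⟩ := exists_nat_one_div_lt hε
  obtain ⟨j, hj, -, hjx⟩ := Real.exists_nat_abs_mul_sub_round_le x n.succ_pos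
  refine ⟨j, hj, hjx.trans_lt (lt_of_le_of_lt ?_ hn)⟩
  gcongr
  simp

lemma one_le_mul_nrm1_add_mul_nrm1 (x : ℝ) {q q' : ℕ} (hq : 0 < q) (hqq' : q ≤ q')
    (h : nrm1 (q' * x) < nrm1 (q * x)) : 1 ≤ q' * nrm1 (q * x) + q * nrm1 (q' * x) := by
  set D : ℤ := q' * round (q * x) - q * round (q' * x)
  have hD : (D : ℝ) = q' * (round (q * x) - q * x) + q * (q' * x - round (q' * x)) := by
    simp only [D]; push_cast; ring
  have hD_le : |(D : ℝ)| ≤ q' * nrm1 (q * x) + q * nrm1 (q' * x) := by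
    rw [hD, nrm1, nrm1, abs_sub_comm (q * x)]
    refine (abs_add_le _ _).trans_eq ?_
    rw [abs_mul, abs_mul, Nat.abs_cast, Nat.abs_cast]
  have hD_ne : D ≠ 0 := by
    intro hD0
    have heq : q' * nrm1 (q * x) = q * nrm1 (q' * x) := by
      have h0 : (q' : ℝ) * (q * x - round (q * x)) = q * (q' * x - round (q' * x)) := by
        rw [hD0, Int.cast_zero] at hD
        linarith
      have := congrArg abs h0
      rwa [abs_mul, abs_mul, Nat.abs_cast, Nat.abs_cast] at this
    have : (q : ℝ) * nrm1 (q' * x) < q * nrm1 (q' * x) :=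
      calc (q : ℝ) * nrm1 (q' * x) < q * nrm1 (q * x) := by gcongr
        _ ≤ q' * nrm1 (q * x) := by gcongr; exact nrm1_nonneg _
        _ = q * nrm1 (q' * x) := heq
    exact this.false
  calc (1 : ℝ) ≤ |(D : ℝ)| := by exact_mod_cast Int.one_le_abs hD_ne
    _ ≤ _ := hD_le

noncomputable def minNrm1 (x : ℝ) (N : ℕ) : ℝ :=
  (Finset.Icc 1 (N + 1)).inf' (Finset.nonempty_Icc.mpr (Nat.le_add_left 1 N))
    fun j : ℕ => nrm1 (j * x)

section minNrm1

variable {x : ℝ}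

lemma minNrm1_le {N j : ℕ} (hj : 0 < j) (hjN : j ≤ N + 1) : minNrm1 x N ≤ nrm1 (j * x) :=
  Finset.inf'_le _ (Finset.mem_Icc.mpr ⟨hj, hjN⟩)

lemma le_minNrm1 {N : ℕ} {c : ℝ} (h : ∀ j : ℕ, 0 < j → j ≤ N + 1 → c ≤ nrm1 (j * x)) :
    c ≤ minNrm1 x N :=
  Finset.le_inf' _ _ fun j hj => h j (Finset.mem_Icc.mp hj).1 (Finset.mem_Icc.mp hj).2

lemma exists_nrm1_eq_minNrm1 (x : ℝ) (N : ℕ) :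
    ∃ q : ℕ, 0 < q ∧ q ≤ N + 1 ∧ nrm1 (q * x) = minNrm1 x N := by
  obtain ⟨q, hq, hqx⟩ :=
    Finset.exists_mem_eq_inf' (Finset.nonempty_Icc.mpr (Nat.le_add_left 1 N)) fun j : ℕ =>
      nrm1 (j * x)
  exact ⟨q, (Finset.mem_Icc.mp hq).1, (Finset.mem_Icc.mp hq).2, hqx.symm⟩

lemma antitone_minNrm1 (x : ℝ) : Antitone (minNrm1 x) := fun _ _ hMN =>
  Finset.inf'_mono _ (Finset.Icc_subset_Icc le_rfl (by omega)) _

lemma Irrational.minNrm1_pos (hx : Irrational x) (N : ℕ) : 0 < minNrm1 x N := by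
  obtain ⟨q, hq, -, hqx⟩ := exists_nrm1_eq_minNrm1 x N
  exact hqx ▸ (hx.natCast_mul hq.ne').nrm1_pos

lemma minNrm1_le_nrm1_intCast_mul {N : ℕ} {z : ℤ} (hz : z ≠ 0) (hzN : z.natAbs ≤ N + 1) :
    minNrm1 x N ≤ nrm1 (z * x) := by
  have habs : nrm1 (z.natAbs * x) = nrm1 (z * x) := by
    rw [Nat.cast_natAbs, Int.cast_abs]
    rcases abs_choice (z : ℝ) with h | h <;> simp only [h, neg_mul, nrm1_neg]
  exact habs ▸ minNrm1_le (Int.natAbs_pos.mpr hz) hzN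

lemma Irrational.exists_le_one_le_mul_minNrm1 (hx : Irrational x) (M : ℕ) :
    ∃ N, M ≤ N ∧ 1 ≤ 2 * ((N : ℝ) + 2) * minNrm1 x N := by
  classical
  obtain ⟨q, hq, hqM, hqx⟩ := exists_nrm1_eq_minNrm1 x M
  have hbetter : ∃ j : ℕ, 0 < j ∧ nrm1 (j * x) < nrm1 (q * x) :=
    exists_nrm1_natCast_mul_lt x (hqx ▸ hx.minNrm1_pos M)
  obtain ⟨hq'_pos, hq'x⟩ := Nat.find_spec hbetter
  set q' := Nat.find hbetter
  have hMq' : M + 2 ≤ q' := by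
    by_contra! h
    exact (hqx ▸ minNrm1_le hq'_pos (by omega : q' ≤ M + 1)).not_gt hq'x
  have hmin : nrm1 (q * x) ≤ minNrm1 x (q' - 2) := le_minNrm1 fun j hj hjq' =>
    not_lt.mp fun hjx => Nat.find_min hbetter (by omega : j < q') ⟨hj, hjx⟩
  have hkey := one_le_mul_nrm1_add_mul_nrm1 x hq (by omega : q ≤ q') hq'x
  refine ⟨q' - 2, by omega, ?_⟩
  have hq'R : ((q' - 2 : ℕ) : ℝ) + 2 = q' := by
    rw [Nat.cast_sub (by omega)]; push_cast; ring
  have hqq'R : (q : ℝ) ≤ q' := by exact_mod_cast (by omega : q ≤ q')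
  rw [hq'R]
  nlinarith [nrm1_nonneg (q' * x)]

end minNrm1

lemma Antitone.tendsto_natCast_mul_of_summable {f : ℕ → ℝ} (hf : Antitone f) (hs : Summable f) :
    Tendsto (fun n : ℕ => (n : ℝ) * f n) atTop (𝓝 0) := by
  have h0 : ∀ n, 0 ≤ f n := fun n => not_lt.mp fun hn => not_summable_of_antitone_of_neg hf hn hs
  have htail : Tendsto (fun n => 2 * ∑' k, f (k + n / 2)) atTop (𝓝 0) := by
    simpa using ((tendsto_sum_nat_add f).comp (Nat.tendsto_div_const_atTop two_ne_zero)).const_mul 2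
  refine squeeze_zero (fun n => mul_nonneg n.cast_nonneg (h0 n)) (fun n => ?_) htail
  have hblock : ((n / 2 + 1 : ℕ) : ℝ) * f n ≤ ∑ k ∈ Finset.range (n / 2 + 1), f (k + n / 2) := by
    simpa using Finset.card_nsmul_le_sum (Finset.range (n / 2 + 1)) (fun k => f (k + n / 2)) (f n)
      fun k hk => hf (by simp at hk; omega)
  have htsum := (hs.comp_injective (add_left_injective (n / 2))).sum_le_tsum
    (Finset.range (n / 2 + 1)) fun k _ => h0 _
  have hn : (n : ℝ) ≤ 2 * ((n / 2 + 1 : ℕ) : ℝ) := by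
    exact_mod_cast (by omega : n ≤ 2 * (n / 2 + 1))
  nlinarith [h0 n]

lemma Irrational.not_summable_minNrm1 {x : ℝ} (hx : Irrational x) : ¬ Summable (minNrm1 x) := by
  intro hs
  have hlim :
      Tendsto (fun N : ℕ => 2 * ((N : ℝ) * minNrm1 x N + 2 * minNrm1 x N)) atTop (𝓝 0) := by
    simpa using (((antitone_minNrm1 x).tendsto_natCast_mul_of_summable hs).add
      (hs.tendsto_atTop_zero.const_mul 2)).const_mul 2
  obtain ⟨M, hM⟩ := eventually_atTop.mp (hlim.eventually (gt_mem_nhds one_pos))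
  obtain ⟨N, hMN, hN⟩ := hx.exists_le_one_le_mul_minNrm1 M
  exact (hM N hMN).not_ge (by linarith)

lemma summable_comp_mul_add_iff {f : ℕ → ℝ} (hf : Antitone f) (m k : ℕ) [NeZero m] :
    Summable (fun n => f (m * n + k)) ↔ Summable f := by
  rw [← summable_indicator_mod_iff hf (k : ZMod m), summable_indicator_mod_iff_summable]

lemma Irrational.ne_zero_of_linear_dependence {x y : ℝ} (hx : Irrational x) {k₁ k₂ k₃ : ℤ}
    (hk : ¬ (k₁ = 0 ∧ k₂ = 0 ∧ k₃ = 0)) (hdep : (k₁ : ℝ) * x + k₂ * y + k₃ = 0) : k₂ ≠ 0 := by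
  rintro rfl
  have hk₁ : k₁ = 0 := by
    by_contra hk₁
    exact ((hx.intCast_mul hk₁).add_intCast k₃).ne_zero (by simpa using hdep)
  subst hk₁
  exact hk ⟨rfl, rfl, by simpa using hdep⟩

lemma Irrational.minNrm1_affine_div_mem_calD1 {x : ℝ} (hx : Irrational x) {A : ℕ} (hA : 0 < A)
    (B : ℕ) : (fun n => minNrm1 x (A * n + B) / A) ∈ calD1 := by
  have : NeZero A := ⟨hA.ne'⟩
  have hanti : Antitone fun n => minNrm1 x (A * n + B) :=
    (antitone_minNrm1 x).comp_monotone fun m n hmn => by gcongr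
  refine ⟨fun n => div_nonneg (hx.minNrm1_pos _).le A.cast_nonneg,
    fun m n hmn => div_le_div_of_nonneg_right (hanti hmn) A.cast_nonneg,
    fun hs => hx.not_summable_minNrm1 ?_⟩
  rw [← summable_comp_mul_add_iff (antitone_minNrm1 x) A B]
  simpa [div_eq_mul_inv, hA.ne'] using hs.mul_right (A : ℝ)

lemma minNrm1_le_natAbs_mul_nrm1 {x y : ℝ} {k₁ k₂ k₃ : ℤ}
    (hdep : (k₁ : ℝ) * x + k₂ * y + k₃ = 0) (hk₂ : k₂ ≠ 0) {n : ℕ} (hn : k₁.natAbs < n) :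
    minNrm1 x (k₂.natAbs * n + k₁.natAbs) ≤ k₂.natAbs * nrm1 (n * x + y) := by
  set z : ℤ := k₂ * n - k₁
  have hk₂n : (k₂ * n).natAbs = k₂.natAbs * n := by rw [Int.natAbs_mul, Int.natAbs_natCast]
  have hz : z ≠ 0 := by
    have : n ≤ k₂.natAbs * n := Nat.le_mul_of_pos_left n (Int.natAbs_pos.mpr hk₂)
    omega
  have hzN : z.natAbs ≤ k₂.natAbs * n + k₁.natAbs + 1 := by
    have := Int.natAbs_sub_le (k₂ * n) k₁
    omega
  have hmod : (k₂ : ℝ) * (n * x + y) = z * x + (-k₃ : ℤ) := by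
    push_cast [z]
    linear_combination hdep
  calc minNrm1 x (k₂.natAbs * n + k₁.natAbs) ≤ nrm1 (z * x) := minNrm1_le_nrm1_intCast_mul hz hzN
    _ = nrm1 (k₂ * (n * x + y)) := by rw [hmod, nrm1_add_intCast]
    _ ≤ k₂.natAbs * nrm1 (n * x + y) := nrm1_intCast_mul_le _ _

theorem stmt18 (x y : ℝ) (hx : Irrational x) (k₁ k₂ k₃ : ℤ)
    (hk : ¬ (k₁ = 0 ∧ k₂ = 0 ∧ k₃ = 0))
    (hdep : (k₁ : ℝ) * x + (k₂ : ℝ) * y + (k₃ : ℝ) = 0) :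
    ∃ ψ ∈ calD1, ∀ᶠ n : ℕ in atTop, ψ n ≤ nrm1 ((n : ℝ) * x + y) := by
  have hk₂ : k₂ ≠ 0 := hx.ne_zero_of_linear_dependence hk hdep
  have hA : 0 < k₂.natAbs := Int.natAbs_pos.mpr hk₂
  refine ⟨_, hx.minNrm1_affine_div_mem_calD1 hA k₁.natAbs, ?_⟩
  filter_upwards [eventually_gt_atTop k₁.natAbs] with n hn
  rw [div_le_iff₀' (by exact_mod_cast hA)]
  exact minNrm1_le_natAbs_mul_nrm1 hdep hk₂ hn
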